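/- arXiv:1005.0287 — 4 statements merged into one kernel-verified Lean document; each statement's English description precedes it below -/
import Mathlib

section
/- A local epimorphism of commutative monoids is surjective on invertible elements: if φ: M → N is an epimorphism in the category of commutative monoids and φ⁻¹(N^×) = M^×, then φ(M^×) = N^×. -/
/-!
Let `H ≤ Nˣ` be the image of `Mˣ`. For a character `χ` of `Nˣ` trivial on `H`, extend `χ` by
zero to a multiplicative map `N → χ(Nˣ) ∪ {0}`; the trivial character extends to the indicator
of `Nˣ`. Locality says that `φ m` is a unit only if it is the image of a unit, so both extensions
agree on `φ(M)`, and since `φ` is an epimorphism they agree on `N`: `χ` is trivial. Characters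
with values in `ℚ/ℤ` separate the points of `Nˣ ⧸ H` because `ℚ/ℤ` is an injective abelian group,
hence `H = Nˣ`. The detour through `ℚ/ℤ`-valued characters, rather than `Nˣ ⧸ H` itself, is
needed because `MonEpi φ` only tests `φ` against monoids in one fixed, arbitrary universe.
-/

/-- `φ` is an epimorphism in the category of commutative monoids:
it is right-cancellable. -/
def MonEpi {M N : Type*} [CommMonoid M] [CommMonoid N] (φ : M →* N) : Prop :=
  ∀ (P : Type*) [CommMonoid P] (f g : N →* P), f.comp φ = g.comp φ → f = g

universe u v w x

theorem Subgroup.mem_of_forall_character_eq_one {A : Type*} [CommGroup A] {H : Subgroup A}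
    {a : A} (h : ∀ χ : A →* Multiplicative (AddCircle (1 : ℚ)), H ≤ χ.ker → χ a = 1) :
    a ∈ H := by
  by_contra ha
  have hq : Additive.ofMul (a : A ⧸ H) ≠ 0 := by
    simpa [QuotientGroup.eq_one_iff] using ha
  obtain ⟨c, hc⟩ := CharacterModule.exists_character_apply_ne_zero_of_ne_zero hq
  let χ := (AddMonoidHom.toMultiplicativeRight c).comp (QuotientGroup.mk' H)
  refine hc (congrArg Multiplicative.toAdd (h χ fun x hx => ?_))
  simp [χ, (QuotientGroup.eq_one_iff x).mpr hx]

section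

variable {M : Type u} {N : Type v} [CommMonoid M] [CommMonoid N] {φ : M →* N}

theorem MonEpi.of_ulift (hφ : MonEpi.{u, v, max w x} φ) : MonEpi.{u, v, w} φ := by
  intro P _ f g hfg
  have hlift := hφ (ULift.{x} P) (MulEquiv.ulift.symm.toMonoidHom.comp f)
    (MulEquiv.ulift.symm.toMonoidHom.comp g) (by rw [MonoidHom.comp_assoc, hfg]; rfl)
  exact (MonoidHom.cancel_left MulEquiv.ulift.symm.injective).1 hlift

theorem MonEpi.eq_one_of_range_le_ker (hφ : MonEpi.{u, v, w} φ)
    (hloc : ∀ m : M, IsUnit (φ m) → IsUnit m) {G : Type w} [CommGroup G] (χ : Nˣ →* G)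
    (hχ : (Units.map φ).range ≤ χ.ker) : χ = 1 := by
  let ψ : MulChar N (WithZero G) :=
    MulChar.ofUnitHom (WithZero.unitsWithZeroEquiv.symm.toMonoidHom.comp χ)
  have hψφ : ψ.toMonoidHom.comp φ = (1 : MulChar N (WithZero G)).toMonoidHom.comp φ := by
    ext m
    by_cases hm : IsUnit (φ m)
    · obtain ⟨u, rfl⟩ := hloc m hm
      have hu : χ (Units.map φ u) = 1 := hχ ⟨u, rfl⟩
      simp only [MonoidHom.comp_apply, MulChar.coe_toMonoidHom]
      rw [← Units.coe_map φ u, MulChar.ofUnitHom_coe, MulChar.one_apply_coe]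
      simp [hu]
    · simp [MulChar.map_nonunit _ hm]
  have hψ := DFunLike.congr_fun (hφ _ _ _ hψφ)
  ext a
  have hψa := hψ a
  simp only [MulChar.coe_toMonoidHom, MulChar.ofUnitHom_coe, MulChar.one_apply_coe, ψ] at hψa
  exact WithZero.coe_injective hψa

end

/-- A local epimorphism of commutative monoids is surjective on invertible elements. -/
theorem local_epi_surjective_on_units {M N : Type*} [CommMonoid M] [CommMonoid N]
    (φ : M →* N) (hepi : MonEpi φ) (hloc : ∀ m : M, IsUnit (φ m) → IsUnit m) :
    ∀ n : N, IsUnit n → ∃ m : M, IsUnit m ∧ φ m = n := by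
  intro n hn
  obtain ⟨u, hu⟩ : hn.unit ∈ (Units.map φ).range :=
    Subgroup.mem_of_forall_character_eq_one fun χ hχ => by
      rw [hepi.of_ulift.eq_one_of_range_le_ker hloc χ hχ, MonoidHom.one_apply]
  exact ⟨u, u.isUnit, congrArg Units.val hu⟩
end

section
/- A local flat homomorphism of commutative monoids is injective: if φ: M → N is local and the base-change functor (− ⊗_M N) from M-sets to N-sets preserves finite limits, then φ is injective. -/
section
open Relation
variable {M N : Type} [CommMonoid M] [CommMonoid N]

/-- The generating relation for the base change `T ⊗_M N` of an `M`-set `T` along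
`φ : M →* N`: `(m • t, n) ∼ (t, φ(m) n)`. -/
inductive TensorRel (φ : M →* N) (T : Type) [MulAction M T] : T × N → T × N → Prop
  | mk (m : M) (t : T) (n : N) : TensorRel φ T (m • t, n) (t, φ m * n)

/-- The base change `T ⊗_M N` of an `M`-set `T` along `φ : M →* N`:
the quotient of `T × N` by the equivalence relation generated by
`(m • t, n) ∼ (t, φ(m) n)`; it carries the `N`-action on the second factor. -/
abbrev MTensor (φ : M →* N) (T : Type) [MulAction M T] : Type :=
  Quotient (EqvGen.setoid (TensorRel φ T))

/-- The class of `(t, n)` in `T ⊗_M N`. -/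
def MTensor.mk (φ : M →* N) {T : Type} [MulAction M T] (t : T) (n : N) :
    MTensor φ T :=
  Quotient.mk (EqvGen.setoid (TensorRel φ T)) (t, n)

/-- The map `T ⊗_M N → U ⊗_M N` induced by a map of `M`-sets `f : T → U`. -/
def MTensor.map (φ : M →* N) {T U : Type} [MulAction M T] [MulAction M U]
    (f : T →[M] U) : MTensor φ T → MTensor φ U :=
  Quotient.lift (fun p => MTensor.mk φ (f p.1) p.2) (by
    intro a b h
    induction h with
    | rel x y hxy =>
      obtain ⟨m, t, n⟩ := hxy
      refine Quotient.sound ?_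
      show EqvGen (TensorRel φ U) (f (m • t), n) (f t, φ m * n)
      rw [map_smul]
      exact EqvGen.rel _ _ (TensorRel.mk m (f t) n)
    | refl x => rfl
    | symm x y _ ih => exact ih.symm
    | trans x y z _ _ ih₁ ih₂ => exact ih₁.trans ih₂)

/-- The comparison map `(T × U) ⊗_M N → (T ⊗_M N) × (U ⊗_M N)`. -/
def tensorProdCompare (φ : M →* N) (T U : Type) [MulAction M T] [MulAction M U] :
    MTensor φ (T × U) → MTensor φ T × MTensor φ U :=
  Quotient.lift (fun p => (MTensor.mk φ p.1.1 p.2, MTensor.mk φ p.1.2 p.2)) (by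
    intro a b h
    induction h with
    | rel x y hxy =>
      obtain ⟨m, t, n⟩ := hxy
      exact Prod.ext (Quotient.sound (EqvGen.rel _ _ (TensorRel.mk m t.1 n)))
        (Quotient.sound (EqvGen.rel _ _ (TensorRel.mk m t.2 n)))
    | refl x => rfl
    | symm x y _ ih => exact ih.symm
    | trans x y z _ _ ih₁ ih₂ => exact ih₁.trans ih₂)

/-- The equalizer of two maps of `M`-sets is an `M`-set. -/
instance tensorEqMulAction {T U : Type} [MulAction M T] [MulAction M U]
    (f g : T →[M] U) : MulAction M {t : T // f t = g t} where
  smul m t := ⟨m • t.1, by rw [map_smul, map_smul, t.2]⟩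
  one_smul t := Subtype.ext (one_smul M t.1)
  mul_smul a b t := Subtype.ext (mul_smul a b t.1)

/-- The inclusion of the equalizer, as a map of `M`-sets. -/
def tensorEqIncl {T U : Type} [MulAction M T] [MulAction M U] (f g : T →[M] U) :
    {t : T // f t = g t} →[M] T :=
  ⟨Subtype.val, fun _ _ => rfl⟩

/-- The comparison map from `E ⊗_M N` (`E` the equalizer of `f, g`) to the equalizer
of the induced maps `T ⊗_M N ⇉ U ⊗_M N`. -/
def tensorEqCompare (φ : M →* N) {T U : Type} [MulAction M T] [MulAction M U]
    (f g : T →[M] U) : MTensor φ {t : T // f t = g t} →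
      {x : MTensor φ T // MTensor.map φ f x = MTensor.map φ g x} :=
  fun y => ⟨MTensor.map φ (tensorEqIncl f g) y, by
    induction y using Quotient.inductionOn with
    | h p =>
      show MTensor.mk φ (f p.1.1) p.2 = MTensor.mk φ (g p.1.1) p.2
      rw [p.1.2]⟩

/-- `φ : M →* N` is flat: the base change functor `(− ⊗_M N)` from `M`-sets to `N`-sets
preserves finite limits, i.e. binary products, the terminal object and equalizers. -/
def MonFlat (φ : M →* N) : Prop :=
  (∀ (T U : Type) [MulAction M T] [MulAction M U],
      Function.Bijective (tensorProdCompare φ T U)) ∧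
  (Nonempty (MTensor φ PUnit) ∧ Subsingleton (MTensor φ PUnit)) ∧
  (∀ (T U : Type) [MulAction M T] [MulAction M U] (f g : T →[M] U),
      Function.Bijective (tensorEqCompare φ f g))

end

/-!
If `φ a = φ b`, the class `[1, 1]` of `M ⊗_M N` is equalized by the maps induced by
`x ↦ a x` and `x ↦ b x`, because `[a, 1] = [1, φ a]`. Surjectivity of the equalizer
comparison map represents it as `[x, n]` with `a x = b x`; evaluating `M ⊗_M N → N` gives
`φ(x) n = 1`, so `φ x` is a unit, hence `x` is a unit by locality, and `a = b`.
-/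

namespace MTensor

variable {M N : Type} [CommMonoid M] [CommMonoid N] (φ : M →* N)

def lift {T X : Type} [MulAction M T] (F : T × N → X)
    (hF : ∀ m t n, F (m • t, n) = F (t, φ m * n)) : MTensor φ T → X :=
  Quotient.lift F fun _ _ h =>
    Setoid.eqvGen_le (s := Setoid.ker F) (fun _ _ ⟨m, t, n⟩ => hF m t n) h

theorem mk_smul {T : Type} [MulAction M T] (m : M) (t : T) (n : N) :
    mk φ (m • t) n = mk φ t (φ m * n) :=
  Quotient.sound (Relation.EqvGen.rel _ _ (TensorRel.mk m t n))

theorem map_mk {T U : Type} [MulAction M T] [MulAction M U] (f : T →[M] U) (t : T) (n : N) :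
    map φ f (mk φ t n) = mk φ (f t) n :=
  rfl

def eval : MTensor φ M → N :=
  lift φ (fun p => φ p.1 * p.2) fun m t n => by
    rw [smul_eq_mul, map_mul, mul_comm (φ m), mul_assoc]

theorem eval_mk (m : M) (n : N) : eval φ (mk φ m n) = φ m * n :=
  rfl

theorem isUnit_of_mk_eq_mk_one {m : M} {n : N} (h : mk φ m n = mk φ 1 1) : IsUnit (φ m) :=
  IsUnit.of_mul_eq_one n <| by simpa only [eval_mk, map_one, mul_one] using congrArg (eval φ) h

theorem map_toMulActionHom_mk_one (a : M) (n : N) :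
    map φ (SMulCommClass.toMulActionHom M M a) (mk φ 1 n) = mk φ 1 (φ a * n) := by
  rw [map_mk, SMulCommClass.toMulActionHom_apply, smul_eq_mul, mul_one, ← mk_smul, smul_eq_mul,
    mul_one]

theorem exists_eq_mk_of_tensorEqCompare_surjective {T U : Type} [MulAction M T] [MulAction M U]
    {f g : T →[M] U} (hsurj : Function.Surjective (tensorEqCompare φ f g)) {x : MTensor φ T}
    (hx : map φ f x = map φ g x) : ∃ t n, f t = g t ∧ mk φ t n = x := by
  obtain ⟨y, hy⟩ := hsurj ⟨x, hx⟩
  induction y using Quotient.inductionOn with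
  | h p => exact ⟨p.1.1, p.2, p.1.2, congrArg Subtype.val hy⟩

end MTensor

open MTensor in
/-- A local flat homomorphism of commutative monoids is injective. -/
theorem local_flat_injective {M N : Type} [CommMonoid M] [CommMonoid N]
    (φ : M →* N) (hloc : ∀ m : M, IsUnit (φ m) → IsUnit m) (hflat : MonFlat φ) :
    Function.Injective φ := by
  intro a b hab
  have hmem : map φ (SMulCommClass.toMulActionHom M M a) (mk φ 1 1) =
      map φ (SMulCommClass.toMulActionHom M M b) (mk φ 1 1) := by
    rw [map_toMulActionHom_mk_one, map_toMulActionHom_mk_one, hab]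
  obtain ⟨x, n, hx, hxn⟩ :=
    exists_eq_mk_of_tensorEqCompare_surjective φ (hflat.2.2 M M _ _).2 hmem
  obtain ⟨u, rfl⟩ := hloc x (isUnit_of_mk_eq_mk_one φ hxn)
  exact (Units.mul_left_inj u).mp hx
end

section
/- Let φ: M → N be a homomorphism of commutative monoids and let p = φ⁻¹(N \ N^×). Then p is a prime ideal of M, and the induced map M_p → N from the localization of M at the submonoid M \ p is local. -/
def MonIdeal {M : Type*} [CommMonoid M] (I : Set M) : Prop :=
  ∀ x ∈ I, ∀ m : M, x * m ∈ I

def MonPrime {M : Type*} [CommMonoid M] (I : Set M) : Prop :=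
  MonIdeal I ∧ (1 : M) ∉ I ∧ ∀ a b : M, a ∉ I → b ∉ I → a * b ∉ I

/-!
The complement of `p` is the submonoid `S = φ⁻¹(N^×)`, which is divisor-closed because a factor
of a unit is a unit; the complement of any divisor-closed submonoid is a prime ideal. For
locality, an element `m / s` of `M_S` maps to `φ m · (φ s)⁻¹`; if this is a unit then so is
`φ m`, i.e. `m ∈ S`, so `(m / s) · s = m` is a unit of `M_S` and hence so is `m / s`.
-/

theorem Submonoid.monPrime_compl {M : Type*} [CommMonoid M] (S : Submonoid M)
    (hS : ∀ x y, x * y ∈ S → x ∈ S) : MonPrime (S : Set M)ᶜ :=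
  ⟨fun x hx m hxm => hx (hS x m hxm), fun h => h S.one_mem,
    fun _ _ ha hb => not_not.2 (S.mul_mem (not_not.1 ha) (not_not.1 hb))⟩

namespace Submonoid.LocalizationMap

variable {M L P : Type*} [CommMonoid M] [CommMonoid L] [CommMonoid P] {S : Submonoid M}

theorem isLocalHom_lift (k : S.LocalizationMap L) {g : M →* P} (hg : ∀ y : S, IsUnit (g y))
    (hS : ∀ m, IsUnit (g m) → m ∈ S) : IsLocalHom (k.lift hg) where
  map_nonunit z hz := by
    obtain ⟨m, s, rfl⟩ := k.mk'_surjective z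
    rw [k.lift_mk', Units.isUnit_mul_units] at hz
    have hkm : IsUnit (k.mk' m s * k s) := by
      rw [k.mk'_spec]
      exact k.map_units ⟨m, hS m hz⟩
    exact isUnit_of_mul_isUnit_left hkm

end Submonoid.LocalizationMap

/-- For `φ : M →* N`, the preimage `p = φ⁻¹(N \ N^×)` of the non-units is a prime ideal
of `M`, and the induced map `M_p → N` from the localization of `M` at the submonoid
`M \ p = φ⁻¹(N^×)` is local: preimages of units are units. -/
theorem preimage_nonunits_prime_and_induced_map_local
    {M N : Type*} [CommMonoid M] [CommMonoid N] (φ : M →* N) :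
    MonPrime {m : M | ¬ IsUnit (φ m)} ∧
    ∀ x : Localization (Submonoid.comap φ (IsUnit.submonoid N)),
      IsUnit (((Localization.monoidOf (Submonoid.comap φ (IsUnit.submonoid N))).lift
        (g := φ) (fun y => y.2)) x) → IsUnit x := by
  set S := Submonoid.comap φ (IsUnit.submonoid N)
  have hS : ∀ x y, x * y ∈ S → x ∈ S := fun x y hxy =>
    isUnit_of_mul_isUnit_left (show IsUnit (φ x * φ y) from φ.map_mul x y ▸ hxy)
  exact ⟨S.monPrime_compl hS,
    ((Localization.monoidOf S).isLocalHom_lift _ fun _ hm => hm).map_nonunit⟩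
end

section
/- For a commutative monoid M and a prime ideal p of M, the stalk at p of the structure sheaf on Spec M is the localization M_p, where the structure sheaf assigns M_a to each basic open D(a). -/
/-- The complement of a prime ideal is a submonoid. -/
def primeCompl {M : Type} [CommMonoid M] (p : Set M) (hp : MonPrime p) : Submonoid M where
  carrier := pᶜ
  one_mem' := hp.2.1
  mul_mem' := fun ha hb => hp.2.2 _ _ ha hb

lemma pow_not_mem_prime {M : Type} [CommMonoid M] {p : Set M} (hp : MonPrime p)
    {a : M} (ha : a ∉ p) : ∀ y ∈ Submonoid.powers a, y ∉ p := by
  rintro y ⟨n, rfl⟩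
  induction n with
  | zero => show a ^ 0 ∉ p; rw [pow_zero]; exact hp.2.1
  | succ n ih => show a ^ (n + 1) ∉ p; rw [pow_succ]; exact hp.2.2 _ _ ih ha

/-- The canonical map `M → M_p`. -/
noncomputable def toMp {M : Type} [CommMonoid M] (p : Set M) (hp : MonPrime p) :
    M →* Localization (primeCompl p hp) :=
  (Localization.monoidOf (primeCompl p hp)).toMonoidHom

/-- For `a ∉ p` (i.e. `p ∈ D(a)`), the canonical map `M_a = O(D(a)) → M_p` of sections of
the structure sheaf of `Spec M` into the stalk at `p`. -/
noncomputable def iotaStalk {M : Type} [CommMonoid M] (p : Set M) (hp : MonPrime p)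
    (a : M) (ha : a ∉ p) :
    Localization (Submonoid.powers a) →* Localization (primeCompl p hp) :=
  (Localization.monoidOf (Submonoid.powers a)).lift (g := toMp p hp)
    (fun y => (Localization.monoidOf (primeCompl p hp)).map_units
      ⟨y.1, pow_not_mem_prime hp ha y.1 y.2⟩)


/-!
Each map `M_a → P` is determined by its restriction to `M`, and compatibility makes all these
restrictions one map `f : M →* P`. It inverts every `s ∉ p`, since `s` is already a unit in `M_s`;
so `f` factors uniquely through `M_p`, and a map out of `M_p` extends the family `g` exactly when
it factors `f`.
-/

open Submonoid

theorem Submonoid.LocalizationMap.existsUnique_comp_eq {M N P : Type*} [CommMonoid M]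
    [CommMonoid N] [CommMonoid P] {S : Submonoid M} (f : LocalizationMap S N) {g : M →* P}
    (hg : ∀ y : S, IsUnit (g y)) : ∃! h : N →* P, h.comp f.toMonoidHom = g :=
  ⟨f.lift hg, f.lift_comp hg,
    fun _ hh => f.epic_of_localizationMap (hh.trans (f.lift_comp hg).symm)⟩

section Stalk

variable {M : Type} [CommMonoid M] {p : Set M} (hp : MonPrime p)

theorem iotaStalk_comp_monoidOf (a : M) (ha : a ∉ p) :
    (iotaStalk p hp a ha).comp (Localization.monoidOf (powers a)).toMonoidHom = toMp p hp :=
  LocalizationMap.lift_comp _ _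

theorem comp_iotaStalk_eq_iff {P : Type} [CommMonoid P] {a : M} (ha : a ∉ p)
    (k : Localization (primeCompl p hp) →* P) (j : Localization (powers a) →* P) :
    k.comp (iotaStalk p hp a ha) = j ↔
      k.comp (toMp p hp) = j.comp (Localization.monoidOf (powers a)).toMonoidHom := by
  rw [← iotaStalk_comp_monoidOf hp a ha, ← MonoidHom.comp_assoc]
  exact ⟨congrArg (MonoidHom.comp · _),
    (Localization.monoidOf (powers a)).epic_of_localizationMap⟩

end Stalk

/-- The stalk at a prime `p` of the structure sheaf of `Spec M` (the sheaf with sections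
`M_a` on the basic open `D(a)`) is the localization `M_p`: the maps `M_a → M_p` (for
`a ∉ p`) form a cocone over the canonical system of the `M_a`, and `M_p` is the colimit:
every compatible family of maps `M_a → P` (for `a ∉ p`) factors uniquely through `M_p`. -/
theorem stalk_of_structure_sheaf_is_localization (M : Type) [CommMonoid M]
    (p : Set M) (hp : MonPrime p) :
    (∀ (a : M) (ha : a ∉ p),
        (iotaStalk p hp a ha).comp ((Localization.monoidOf (Submonoid.powers a)).toMonoidHom)
          = toMp p hp) ∧
    (∀ (P : Type) [CommMonoid P]
        (g : ∀ a : M, a ∉ p → (Localization (Submonoid.powers a) →* P)),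
        (∀ (a : M) (ha : a ∉ p) (b : M) (hb : b ∉ p),
            (g a ha).comp ((Localization.monoidOf (Submonoid.powers a)).toMonoidHom)
              = (g b hb).comp ((Localization.monoidOf (Submonoid.powers b)).toMonoidHom)) →
        ∃! h : Localization (primeCompl p hp) →* P,
          ∀ (a : M) (ha : a ∉ p), h.comp (iotaStalk p hp a ha) = g a ha) := by
  refine ⟨iotaStalk_comp_monoidOf hp, fun P _ g hcompat => ?_⟩
  set f := (g 1 hp.2.1).comp (Localization.monoidOf (powers (1 : M))).toMonoidHom
  have hgf (a : M) (ha : a ∉ p) :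
      (g a ha).comp (Localization.monoidOf (powers a)).toMonoidHom = f :=
    hcompat a ha 1 hp.2.1
  have hf_unit (s : primeCompl p hp) : IsUnit (f s) := by
    rw [← hgf s.1 s.2]
    exact (Localization.monoidOf (powers s.1)).isUnit_comp _ ⟨s.1, mem_powers s.1⟩
  have hcomp_iff (h : Localization (primeCompl p hp) →* P) :
      (∀ (a : M) (ha : a ∉ p), h.comp (iotaStalk p hp a ha) = g a ha) ↔
        h.comp (toMp p hp) = f := by
    simp only [comp_iotaStalk_eq_iff, hgf]
    exact ⟨fun hall => hall 1 hp.2.1, fun hf _ _ => hf⟩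
  exact (existsUnique_congr hcomp_iff).2
    ((Localization.monoidOf (primeCompl p hp)).existsUnique_comp_eq hf_unit)
end
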